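/- The filter F_ω on Path(E) generated by the sets U_n = {u ∈ Path(E) : |u| > n}, n ∈ ℕ, is a topological filter, provided the path lengths in E are unbounded (so that each U_n is nonempty); consequently (G(E), τ_{F_ω}) is a topological inverse semigroup. -/

import Mathlib

universe u

/-- A directed graph. -/
structure DiGraph : Type (u + 1) where
  V : Type u
  E : Type u
  s : E → V
  r : E → V

namespace DiGraph

variable (G : DiGraph.{u})

/-- A list of edges forms a valid path starting at vertex `v`. -/
def Valid (v : G.V) : List G.E → Prop
  | [] => True
  | e :: l => G.s e = v ∧ Valid (G.r e) l

/-- the endpoint of a list of edges starting at `v`. -/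
def dst (v : G.V) : List G.E → G.V
  | [] => v
  | e :: l => dst (G.r e) l

variable {G}

lemma dst_append (v : G.V) (l₁ l₂ : List G.E) :
    G.dst v (l₁ ++ l₂) = G.dst (G.dst v l₁) l₂ := by
  induction l₁ generalizing v with
  | nil => rfl
  | cons e t ih => simp [dst, ih]

lemma valid_append (v : G.V) (l₁ l₂ : List G.E) :
    G.Valid v (l₁ ++ l₂) ↔ G.Valid v l₁ ∧ G.Valid (G.dst v l₁) l₂ := by
  induction l₁ generalizing v with
  | nil => simp [Valid, dst]
  | cons e t ih => simp [Valid, dst, ih, and_assoc]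

variable (G) in
/-- A (finite, directed) path in `G`: a source vertex together with a
composable list of edges.  Paths of length zero are the vertices. -/
structure GPath : Type u where
  src : G.V
  edges : List G.E
  valid : G.Valid src edges

/-- The range (end vertex) of a path. -/
def GPath.rng (p : G.GPath) : G.V := G.dst p.src p.edges

/-- Concatenation of composable paths. -/
def GPath.comp (p q : G.GPath) (h : p.rng = q.src) : G.GPath :=
  ⟨p.src, p.edges ++ q.edges, by
    rw [valid_append]
    exact ⟨p.valid, by rw [show G.dst p.src p.edges = q.src from h]; exact q.valid⟩⟩

lemma GPath.comp_rng (p q : G.GPath) (h : p.rng = q.src) : (p.comp q h).rng = q.rng := by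
  show G.dst p.src (p.edges ++ q.edges) = _
  rw [dst_append, show G.dst p.src p.edges = q.src from h]; rfl

/-- If `p` is a prefix of the path `q`, the remaining path (so that
`q = p.comp (p.strip q _ _)`). -/
def GPath.strip (p q : G.GPath) (hs : p.src = q.src) (hp : p.edges <+: q.edges) : G.GPath :=
  ⟨p.rng, q.edges.drop p.edges.length, by
    obtain ⟨t, ht⟩ := hp
    have h1 : p.edges ++ q.edges.drop p.edges.length = q.edges := by
      rw [← ht, List.drop_left]
    have h2 : G.Valid p.src (p.edges ++ q.edges.drop p.edges.length) := by
      rw [h1, hs]; exact q.valid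
    exact ((valid_append _ _ _).mp h2).2⟩

lemma GPath.strip_rng (p q : G.GPath) (hs : p.src = q.src) (hp : p.edges <+: q.edges) :
    (p.strip q hs hp).rng = q.rng := by
  show G.dst p.rng (q.edges.drop p.edges.length) = G.dst q.src q.edges
  obtain ⟨t, ht⟩ := hp
  have h1 : p.edges ++ q.edges.drop p.edges.length = q.edges := by
    rw [← ht, List.drop_left]
  conv_rhs => rw [← hs, ← h1]
  rw [dst_append]; rfl

variable (G) in
/-- A nonzero element `a b⁻¹` of the graph inverse semigroup: a pair of
paths with the same range. -/
structure NZ : Type u where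
  a : G.GPath
  b : G.GPath
  h : a.rng = b.rng

/-- The graph inverse semigroup `G(E)` over a directed graph, in normal form:
the elements `a b⁻¹` with `r(a) = r(b)`, together with a zero element. -/
def GIS (G : DiGraph.{u}) : Type u := Option (NZ G)

instance : Zero (GIS G) := ⟨none⟩

open scoped Classical in
/-- The multiplication of the graph inverse semigroup:
`a b⁻¹ · c d⁻¹ = a c₁ d⁻¹` if `c = b c₁`, `a (d b₁)⁻¹` if `b = c b₁`, and `0` otherwise. -/
noncomputable instance : Mul (GIS G) :=
  ⟨fun x y =>
    match x, y with
    | none, _ => none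
    | some _, none => none
    | some ⟨a, b, hab⟩, some ⟨c, d, hcd⟩ =>
      if h : b.src = c.src ∧ b.edges <+: c.edges then
        some ⟨a.comp (b.strip c h.1 h.2) hab, d, by
          first
          | exact (GPath.comp_rng _ _ _).trans ((GPath.strip_rng _ _ _ _).trans hcd)
          | (erw [GPath.comp_rng, GPath.strip_rng]; exact hcd)⟩
      else if h' : c.src = b.src ∧ c.edges <+: b.edges then
        some ⟨a, d.comp (c.strip b h'.1 h'.2) hcd.symm, by
          first
          | exact hab.trans ((GPath.comp_rng _ _ _).trans (GPath.strip_rng _ _ _ _)).symm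
          | (erw [GPath.comp_rng, GPath.strip_rng]; exact hab)⟩
      else none⟩

/-- The nonzero element `a b⁻¹` of `G(E)` determined by a pair of paths
with the same range. -/
def GIS.nz (n : NZ G) : GIS G := some n

/-- The inversion of the graph inverse semigroup: `(u v⁻¹)⁻¹ = v u⁻¹`. -/
def GIS.inv : GIS G → GIS G
  | none => none
  | some ⟨a, b, h⟩ => some ⟨b, a, h.symm⟩

end DiGraph
namespace DiGraph

variable {G : DiGraph.{u}}

/-- membership predicate for the basic neighbourhoods of zero: all of
`a b⁻¹` with `a, b ∈ F`, together with `0`. -/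
def inUF (F : Set G.GPath) : GIS G → Prop
  | none => True
  | some n => n.a ∈ F ∧ n.b ∈ F

/-- The basic neighbourhood `U_F(0) = {a b⁻¹ : a, b ∈ F} ∪ {0}` of zero. -/
def UF (F : Set G.GPath) : Set (GIS G) := {x | inUF F x}

lemma inUF_mono {F₁ F₂ : Set G.GPath} (h : F₁ ⊆ F₂) :
    ∀ x : GIS G, inUF F₁ x → inUF F₂ x := by
  intro x hx
  cases x with
  | none => trivial
  | some n => exact ⟨h hx.1, h hx.2⟩

/-- The topology `τ_𝓕` on `G(E)` determined by a filter `𝓕` on `Path(E)`: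
every nonzero element is isolated, and the sets `U_F(0)`, `F ∈ 𝓕`, form a
neighbourhood base at `0`. -/
def tauF (𝓕 : Filter G.GPath) : TopologicalSpace (GIS G) where
  IsOpen U := (0 : GIS G) ∈ U → ∃ F ∈ 𝓕, UF F ⊆ U
  isOpen_univ := fun _ => ⟨Set.univ, Filter.univ_mem, Set.subset_univ _⟩
  isOpen_inter := fun U V hU hV h0 => by
    obtain ⟨F₁, hF₁, hs₁⟩ := hU h0.1
    obtain ⟨F₂, hF₂, hs₂⟩ := hV h0.2
    exact ⟨F₁ ∩ F₂, Filter.inter_mem hF₁ hF₂, fun x hx =>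
      ⟨hs₁ (inUF_mono Set.inter_subset_left x hx),
       hs₂ (inUF_mono Set.inter_subset_right x hx)⟩⟩
  isOpen_sUnion := fun S hS h0 => by
    obtain ⟨U, hU, h0U⟩ := h0
    obtain ⟨F, hF, hs⟩ := hS U hU h0U
    exact ⟨F, hF, hs.trans (Set.subset_sUnion_of_mem hU)⟩

/-- The prefix partial order on paths: `a ≤ b` iff `b` is a prefix of `a`. -/
def prefLE (a b : G.GPath) : Prop := b.src = a.src ∧ b.edges <+: a.edges

/-- An ideal of `(Path(E), ≤)`: a set `A` with `↓A = A`. -/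
def IsIdeal (A : Set G.GPath) : Prop :=
  ∀ a b : G.GPath, prefLE a b → b ∈ A → a ∈ A

/-- A topological filter on `Path(E)`:
(i) for `F ∈ 𝓕` and paths `a, b` with `r(a) = r(b)`, the set
`F \ {bk : k ∈ Path(E), ak ∉ F}` belongs to `𝓕`;
(ii) `𝓕` contains all cofinite subsets of `Path(E)`;
(iii) `𝓕` has a base consisting of ideals of `(Path(E), ≤)`. -/
def IsTopFilter (𝓕 : Filter G.GPath) : Prop :=
  (∀ F ∈ 𝓕, ∀ a b : G.GPath, a.rng = b.rng →
      F \ {p | ∃ (k : G.GPath) (h1 : b.rng = k.src) (h2 : a.rng = k.src),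
        p = b.comp k h1 ∧ a.comp k h2 ∉ F} ∈ 𝓕) ∧
  𝓕 ≤ Filter.cofinite ∧
  (∀ F ∈ 𝓕, ∃ I ∈ 𝓕, I ⊆ F ∧ IsIdeal I)

variable (G) in
/-- The filter `𝓕_ω` generated by the sets `U_n = {u ∈ Path(E) : |u| > n}`. -/
def Fomega : Filter G.GPath :=
  Filter.generate {S | ∃ n : ℕ, S = {u : G.GPath | n < u.edges.length}}

variable (G) in
/-- `U_n(0) = {u v⁻¹ : min{|u|,|v|} > n} ∪ {0}`. -/
def Un (n : ℕ) : Set (GIS G) := UF {u : G.GPath | n < u.edges.length}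

end DiGraph

/-!
A set of `𝓕_ω` contains some `U_n`; each `U_n` is down-closed for the prefix order, contains
every singleton's complement once `n` exceeds that path's length, and `U_{n+|b|}` contains no
`bk` with `ak ∉ U_n`, because `|ak| ≥ |k| > n`. So `𝓕_ω` is a topological filter.

For an arbitrary topological filter `𝓕`, inversion swaps the two paths and so preserves every
`U_F(0)`, while `𝓕 ≤ cofinite` separates `0` from `ab⁻¹` by `U_F(0)` with `F = {a}ᶜ`.
Multiplication is continuous at pairs of isolated points trivially. At `(0, 0)` an ideal `I ⊆ F`
works, since `U_I(0) · U_I(0) ⊆ U_I(0)`: the product of `ab⁻¹` and `cd⁻¹` is `(ak)d⁻¹` or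
`a(dk)⁻¹`, and `ak ≤ a`, `dk ≤ d`. At `(ab⁻¹, 0)` take `V = F \ {bk : ak ∉ F}` minus the finitely
many prefixes of `b`: then `cd⁻¹ ∈ U_V(0)` forces `c = bk` with `ak ∈ F`, or the product is `0`.
-/

namespace DiGraph

open Filter Topology

variable {G : DiGraph.{u}}

lemma GPath.ext {p q : G.GPath} (hs : p.src = q.src) (he : p.edges = q.edges) : p = q := by
  cases p; cases q; subst hs he; rfl

lemma GPath.comp_strip (b c : G.GPath) (hs : b.src = c.src) (hp : b.edges <+: c.edges) :
    b.comp (b.strip c hs hp) rfl = c :=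
  GPath.ext hs (List.prefix_iff_eq_append.1 hp)

lemma prefLE_comp (a k : G.GPath) (h : a.rng = k.src) : prefLE (a.comp k h) a :=
  ⟨rfl, List.prefix_append _ _⟩

lemma finite_setOf_prefLE (b : G.GPath) : {p | prefLE b p}.Finite := by
  refine Set.Finite.of_finite_image (f := GPath.edges) ?_
    fun p hp q hq h => GPath.ext (hp.1.trans hq.1.symm) h
  refine (List.finite_toSet b.edges.inits).subset ?_
  rintro _ ⟨p, hp, rfl⟩
  exact (List.mem_inits _ _).2 hp.2

/-- The set `{bk : ak ∉ F}` of the definition of a topological filter. -/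
def badExtensions (F : Set G.GPath) (a b : G.GPath) : Set G.GPath :=
  {p | ∃ (k : G.GPath) (h1 : b.rng = k.src) (h2 : a.rng = k.src),
    p = b.comp k h1 ∧ a.comp k h2 ∉ F}

lemma GIS.zero_or_nz (x : GIS G) : x = 0 ∨ ∃ m : NZ G, x = GIS.nz m :=
  Option.casesOn x (Or.inl rfl) fun m => Or.inr ⟨m, rfl⟩

lemma GIS.zero_mul (y : GIS G) : (0 : GIS G) * y = 0 := rfl

lemma GIS.mul_zero (x : GIS G) : x * (0 : GIS G) = 0 := by
  rcases GIS.zero_or_nz x with rfl | ⟨m, rfl⟩ <;> rfl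

lemma GIS.inv_mem_UF {F : Set G.GPath} {x : GIS G} (hx : x ∈ UF F) : x.inv ∈ UF F := by
  rcases GIS.zero_or_nz x with rfl | ⟨⟨a, b, h⟩, rfl⟩
  exacts [trivial, ⟨hx.2, hx.1⟩]

lemma nz_mul_nz_mem_UF {F : Set G.GPath} {a b c d : G.GPath} (hab : a.rng = b.rng)
    (hcd : c.rng = d.rng)
    (hext : ∀ k h₁ h₂, c = b.comp k h₁ → a.comp k h₂ ∈ F ∧ d ∈ F)
    (hpre : ∀ k h₁ h₂, b = c.comp k h₁ → a ∈ F ∧ d.comp k h₂ ∈ F) :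
    GIS.nz ⟨a, b, hab⟩ * GIS.nz ⟨c, d, hcd⟩ ∈ UF F := by
  simp only [HMul.hMul, Mul.mul, GIS.nz, UF, Set.mem_ofPred_eq]
  by_cases h : b.src = c.src ∧ b.edges <+: c.edges
  · erw [dif_pos h]
    exact hext _ rfl hab (GPath.comp_strip b c h.1 h.2).symm
  erw [dif_neg h]
  by_cases h' : c.src = b.src ∧ c.edges <+: b.edges
  · erw [dif_pos h']
    exact hpre _ rfl hcd.symm (GPath.comp_strip c b h'.1 h'.2).symm
  erw [dif_neg h']
  trivial

lemma mul_mem_UF_of_isIdeal {I : Set G.GPath} (hI : IsIdeal I) {x y : GIS G}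
    (hx : x ∈ UF I) (hy : y ∈ UF I) : x * y ∈ UF I := by
  rcases GIS.zero_or_nz x with rfl | ⟨⟨a, b, hab⟩, rfl⟩
  · exact trivial
  rcases GIS.zero_or_nz y with rfl | ⟨⟨c, d, hcd⟩, rfl⟩
  · rw [GIS.mul_zero]; exact trivial
  exact nz_mul_nz_mem_UF hab hcd
    (fun k _ h₂ _ => ⟨hI _ _ (prefLE_comp a k h₂) hx.1, hy.2⟩)
    (fun k _ h₂ _ => ⟨hx.1, hI _ _ (prefLE_comp d k h₂) hy.2⟩)

lemma nz_mul_mem_UF {F : Set G.GPath} {a b : G.GPath} (hab : a.rng = b.rng) {y : GIS G}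
    (hy : y ∈ UF ((F \ badExtensions F a b) \ {p | prefLE b p})) :
    GIS.nz ⟨a, b, hab⟩ * y ∈ UF F := by
  rcases GIS.zero_or_nz y with rfl | ⟨⟨c, d, hcd⟩, rfl⟩
  · rw [GIS.mul_zero]; exact trivial
  obtain ⟨⟨⟨-, hc⟩, hcb⟩, ⟨⟨hd, -⟩, -⟩⟩ := hy
  refine nz_mul_nz_mem_UF hab hcd (fun k h₁ h₂ hk => ⟨?_, hd⟩) (fun k h₁ _ hk => ?_)
  · by_contra hak
    exact hc ⟨k, h₁, h₂, hk, hak⟩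
  · exact (hcb (hk ▸ prefLE_comp c k h₁)).elim

lemma mul_nz_mem_UF {F : Set G.GPath} {c d : G.GPath} (hcd : c.rng = d.rng) {x : GIS G}
    (hx : x ∈ UF ((F \ badExtensions F d c) \ {p | prefLE c p})) :
    x * GIS.nz ⟨c, d, hcd⟩ ∈ UF F := by
  rcases GIS.zero_or_nz x with rfl | ⟨⟨a, b, hab⟩, rfl⟩
  · exact trivial
  obtain ⟨⟨⟨ha, -⟩, -⟩, ⟨⟨-, hb⟩, hbc⟩⟩ := hx
  refine nz_mul_nz_mem_UF hab hcd (fun k h₁ _ hk => ?_) (fun k h₁ h₂ hk => ⟨ha, ?_⟩)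
  · exact (hbc (hk ▸ prefLE_comp b k h₁)).elim
  · by_contra hdk
    exact hb ⟨k, h₁, h₂, hk, hdk⟩

section tauF

variable {𝓕 : Filter G.GPath}

lemma isOpen_UF {F : Set G.GPath} (hF : F ∈ 𝓕) : IsOpen[tauF 𝓕] (UF F) :=
  fun _ => ⟨F, hF, subset_rfl⟩

lemma nhds_nz_tauF (m : NZ G) : @nhds _ (tauF 𝓕) (GIS.nz m) = pure (GIS.nz m) :=
  @isOpen_singleton_iff_nhds_eq_pure _ (tauF 𝓕) _ |>.1
    fun h => (Option.some_ne_none m (Set.mem_singleton_iff.1 h).symm).elim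

lemma hasBasis_nhds_zero_tauF : (@nhds _ (tauF 𝓕) 0).HasBasis (· ∈ 𝓕) UF := by
  let := tauF 𝓕
  refine ⟨fun s => ⟨fun hs => ?_, fun ⟨F, hF, hFs⟩ =>
    mem_of_superset ((isOpen_UF hF).mem_nhds trivial) hFs⟩⟩
  obtain ⟨t, hts, ht, h0⟩ := mem_nhds_iff.1 hs
  obtain ⟨F, hF, hFt⟩ := ht h0
  exact ⟨F, hF, hFt.trans hts⟩

lemma continuous_inv_tauF : Continuous[tauF 𝓕, tauF 𝓕] GIS.inv := by
  let := tauF 𝓕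
  refine continuous_iff_continuousAt.2 fun x => ?_
  rcases GIS.zero_or_nz x with rfl | ⟨m, rfl⟩
  · exact (hasBasis_nhds_zero_tauF.tendsto_iff hasBasis_nhds_zero_tauF).2
      fun F hF => ⟨F, hF, fun _ => GIS.inv_mem_UF⟩
  · rw [ContinuousAt, nhds_nz_tauF]
    exact tendsto_pure_nhds _ _

lemma disjoint_nhds_zero_nhds_nz_tauF (h𝓕 : 𝓕 ≤ cofinite) (m : NZ G) :
    Disjoint (@nhds _ (tauF 𝓕) 0) (@nhds _ (tauF 𝓕) (GIS.nz m)) := by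
  rw [nhds_nz_tauF, hasBasis_nhds_zero_tauF.disjoint_iff_left]
  exact ⟨{m.a}ᶜ, h𝓕 (Set.finite_singleton _).compl_mem_cofinite, fun h => h.1 rfl⟩

lemma t2Space_tauF (h𝓕 : 𝓕 ≤ cofinite) : @T2Space (GIS G) (tauF 𝓕) := by
  let := tauF 𝓕
  refine t2Space_iff_disjoint_nhds.2 fun x y hxy => ?_
  rcases GIS.zero_or_nz x with rfl | ⟨m, rfl⟩ <;> rcases GIS.zero_or_nz y with rfl | ⟨m', rfl⟩
  · exact absurd rfl hxy
  · exact disjoint_nhds_zero_nhds_nz_tauF h𝓕 m'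
  · exact (disjoint_nhds_zero_nhds_nz_tauF h𝓕 m).symm
  · rw [nhds_nz_tauF, nhds_nz_tauF]
    exact disjoint_pure_pure.2 hxy

theorem IsTopFilter.continuous_mul_tauF (h : IsTopFilter 𝓕) :
    Continuous[@instTopologicalSpaceProd _ _ (tauF 𝓕) (tauF 𝓕), tauF 𝓕]
      (fun p : GIS G × GIS G => p.1 * p.2) := by
  let := tauF 𝓕
  obtain ⟨hbad, hcof, hideal⟩ := h
  have hprefix (b : G.GPath) : {p | prefLE b p}ᶜ ∈ 𝓕 :=
    hcof (finite_setOf_prefLE b).compl_mem_cofinite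
  refine continuous_iff_continuousAt.2 fun ⟨x, y⟩ => ?_
  rw [ContinuousAt, nhds_prod_eq]
  rcases GIS.zero_or_nz x with rfl | ⟨⟨a, b, hab⟩, rfl⟩ <;>
    rcases GIS.zero_or_nz y with rfl | ⟨⟨c, d, hcd⟩, rfl⟩
  · refine (hasBasis_nhds_zero_tauF.prod_self.tendsto_iff hasBasis_nhds_zero_tauF).2
      fun F hF => ?_
    obtain ⟨I, hI, hIF, hIideal⟩ := hideal F hF
    exact ⟨I, hI, fun p hp => inUF_mono hIF _ (mul_mem_UF_of_isIdeal hIideal hp.1 hp.2)⟩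
  · rw [nhds_nz_tauF, prod_pure, tendsto_map'_iff]
    refine (hasBasis_nhds_zero_tauF.tendsto_iff hasBasis_nhds_zero_tauF).2 fun F hF =>
      ⟨_, sdiff_mem (hbad F hF d c hcd.symm) (hprefix c), fun _ => mul_nz_mem_UF hcd⟩
  · rw [nhds_nz_tauF, pure_prod, tendsto_map'_iff, GIS.mul_zero]
    refine (hasBasis_nhds_zero_tauF.tendsto_iff hasBasis_nhds_zero_tauF).2 fun F hF =>
      ⟨_, sdiff_mem (hbad F hF a b hab) (hprefix b), fun _ => nz_mul_mem_UF hab⟩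
  · rw [nhds_nz_tauF, nhds_nz_tauF, prod_pure_pure]
    exact tendsto_pure_nhds _ _

end tauF

theorem Fomega_eq_comap : Fomega G = Filter.comap (fun u : G.GPath => u.edges.length) atTop := by
  refine le_antisymm (fun t ht => ?_) (Filter.le_generate_iff.2 ?_)
  · obtain ⟨n, -, hn⟩ := (atTop_basis_Ioi.comap _).mem_iff.1 ht
    exact mem_of_superset (Filter.mem_generate_of_mem ⟨n, rfl⟩) hn
  · rintro _ ⟨n, rfl⟩
    exact preimage_mem_comap (Ioi_mem_atTop n)

lemma hasBasis_Fomega :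
    (Fomega G).HasBasis (fun _ => True) fun n : ℕ => {u : G.GPath | n < u.edges.length} :=
  Fomega_eq_comap ▸ atTop_basis_Ioi.comap _

theorem isTopFilter_Fomega : IsTopFilter (Fomega G) := by
  refine ⟨fun F hF a b _ => ?_, le_cofinite_iff_compl_singleton_mem.2 fun x => ?_,
    fun F hF => ?_⟩
  · obtain ⟨n, -, hn⟩ := hasBasis_Fomega.mem_iff.1 hF
    refine hasBasis_Fomega.mem_iff.2 ⟨n + b.edges.length, trivial, fun p hp => ?_⟩
    simp only [Set.mem_ofPred_eq] at hp
    refine ⟨hn (show n < p.edges.length by omega), ?_⟩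
    rintro ⟨k, _, _, rfl, hak⟩
    simp only [GPath.comp, List.length_append] at hp
    exact hak (hn (show n < (a.comp k _).edges.length by
      simp only [GPath.comp, List.length_append]; omega))
  · exact hasBasis_Fomega.mem_iff.2
      ⟨x.edges.length, trivial, fun u hu hux => (hux ▸ hu : x.edges.length < _).false⟩
  · obtain ⟨n, -, hn⟩ := hasBasis_Fomega.mem_iff.1 hF
    exact ⟨_, hasBasis_Fomega.mem_of_mem trivial, hn,
      fun a b hab hb => lt_of_lt_of_le hb hab.2.length_le⟩

end DiGraph

open DiGraph in
theorem Fomega_topological_general (G : DiGraph.{u}) :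
    IsTopFilter (Fomega G) ∧
    @T2Space (GIS G) (tauF (Fomega G)) ∧
    @Continuous (GIS G × GIS G) (GIS G)
      (@instTopologicalSpaceProd _ _ (tauF (Fomega G)) (tauF (Fomega G)))
      (tauF (Fomega G)) (fun p => p.1 * p.2) ∧
    @Continuous (GIS G) (GIS G) (tauF (Fomega G)) (tauF (Fomega G)) GIS.inv :=
  ⟨isTopFilter_Fomega, t2Space_tauF isTopFilter_Fomega.2.1,
    isTopFilter_Fomega.continuous_mul_tauF, continuous_inv_tauF⟩

open DiGraph in
/-- The filter `𝓕_ω` on `Path(E)` generated by the sets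
`U_n = {u ∈ Path(E) : |u| > n}` is a topological filter, provided the path
lengths in `E` are unbounded; consequently `(G(E), τ_{𝓕_ω})` is a (Hausdorff)
topological inverse semigroup. -/
theorem Fomega_topological (G : DiGraph.{u})
    (hlen : ∀ n : ℕ, ∃ u : G.GPath, n < u.edges.length) :
    IsTopFilter (Fomega G) ∧
    @T2Space (GIS G) (tauF (Fomega G)) ∧
    @Continuous (GIS G × GIS G) (GIS G)
      (@instTopologicalSpaceProd _ _ (tauF (Fomega G)) (tauF (Fomega G)))
      (tauF (Fomega G)) (fun p => p.1 * p.2) ∧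
    @Continuous (GIS G) (GIS G) (tauF (Fomega G)) (tauF (Fomega G)) GIS.inv :=
  Fomega_topological_general G
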